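/- arXiv:1511.04023 — 5 statements merged into one kernel-verified Lean document; each statement's English description precedes it below -/
import Mathlib

section
/- Suppose X > 0 and λ ≥ 0 satisfies g(λ) = X, where g(λ) = Σ_{j=0}^{n} b j · max{k·(d j)/(p j + λ) − 1, 0}. Then k/(X + 1) − p 0 ≤ λ ≤ k. -/
/-- If X > 0 and λ ≥ 0 satisfies g(λ) = Σ_j b j · max{k·(d j)/(p j + λ) − 1, 0} = X,
then k/(X + 1) − p 0 ≤ λ ≤ k. -/
theorem lambda_bounds (n : ℕ) (b p d : Fin (n + 1) → ℝ) (k X lam : ℝ)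
    (hb : ∀ j, 0 < b j) (hb0 : b 0 = 1)
    (hp : ∀ j, 0 < p j)
    (hd : ∀ j, 0 < d j ∧ d j ≤ 1) (hd0 : d 0 = 1)
    (hk : 0 < k) (hX : 0 < X) (hlam : 0 ≤ lam)
    (heq : ∑ j, b j * max (k * d j / (p j + lam) - 1) 0 = X) :
    k / (X + 1) - p 0 ≤ lam ∧ lam ≤ k := by
  constructor
  · have h0 : b 0 * max (k * d 0 / (p 0 + lam) - 1) 0 ≤ X := by
      rw [← heq]
      exact Finset.single_le_sum (f := fun j => b j * max (k * d j / (p j + lam) - 1) 0)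
        (fun j _ => mul_nonneg (hb j).le (le_max_right _ _)) (Finset.mem_univ 0)
    rw [hb0, hd0, one_mul, mul_one] at h0
    have hmax : k / (p 0 + lam) - 1 ≤ X := le_trans (le_max_left _ _) h0
    have hpos : 0 < p 0 + lam := by linarith [hp 0]
    have h1 : k / (p 0 + lam) ≤ X + 1 := by linarith
    have h2 : k ≤ (X + 1) * (p 0 + lam) := (div_le_iff₀ hpos).mp h1
    have hX1 : (0:ℝ) < X + 1 := by linarith
    have h3 : k / (X + 1) ≤ p 0 + lam := (div_le_iff₀ hX1).mpr (by nlinarith)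
    linarith
  · by_contra h
    push_neg at h
    have hterm : ∀ j, max (k * d j / (p j + lam) - 1) 0 = 0 := by
      intro j
      have hpos : 0 < p j + lam := by linarith [hp j]
      have h1 : k * d j < p j + lam := by nlinarith [(hd j).1, (hd j).2, hp j]
      have h2 : k * d j / (p j + lam) < 1 := (div_lt_one hpos).mpr h1
      exact max_eq_right (by linarith)
    simp only [hterm, mul_zero, Finset.sum_const_zero] at heq
    linarith
end

section
/- Let λ ∈ ℝ satisfy p j + λ > 0 for all j, and suppose Σ_{j=0}^{n} b j · max{k·(d j)/(p j + λ) − 1, 0} = X. Then the point x* with coordinates x*_j = max{k·(d j)/(p j + λ) − 1, 0} is a global maximizer of the logarithmic-utility scheduling objective F(x) = Σ_{j=0}^{n} b j · (k·(d j)·log(1 + x j) − (p j)·(x j)) over the feasible set F = {x ∈ ℝ^{n+1} : x j ≥ 0 for all j and Σ_j b j · x j = X}. -/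
lemma log_util_key (kd pj lam xj : ℝ) (hkd : 0 < kd) (hl : 0 < pj + lam)
    (hx : 0 ≤ xj) :
    kd * Real.log (1 + xj) - pj * xj -
      lam * (xj - max (kd / (pj + lam) - 1) 0) ≤
    kd * Real.log (1 + max (kd / (pj + lam) - 1) 0) -
      pj * max (kd / (pj + lam) - 1) 0 := by
  set s := max (kd / (pj + lam) - 1) 0 with hsdef
  have hs0 : 0 ≤ s := le_max_right _ _
  have h1s : 0 < 1 + s := by linarith
  have h1x : 0 < 1 + xj := by linarith
  have hlog : Real.log (1 + xj) ≤ Real.log (1 + s) + (xj - s) / (1 + s) := by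
    have h := Real.log_le_sub_one_of_pos (x := (1 + xj) / (1 + s)) (by positivity)
    rw [Real.log_div (by linarith) (by linarith)] at h
    have he : (1 + xj) / (1 + s) - 1 = (xj - s) / (1 + s) := by
      field_simp
      ring
    rw [he] at h
    linarith
  have hfac : (kd / (1 + s) - (pj + lam)) * (xj - s) ≤ 0 := by
    rcases le_or_gt (kd / (pj + lam) - 1) 0 with h | h
    · have hs : s = 0 := max_eq_right h
      have hle : kd ≤ pj + lam := by
        have := (div_le_one hl).mp (by linarith)
        linarith
      rw [hs]
      apply mul_nonpos_of_nonpos_of_nonneg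
      · simp; linarith
      · linarith
    · have hs : s = kd / (pj + lam) - 1 := max_eq_left h.le
      have h1s' : 1 + s = kd / (pj + lam) := by rw [hs]; ring
      have : kd / (1 + s) = pj + lam := by
        rw [h1s']
        field_simp
      rw [this]
      simp
  have h2 : kd * ((xj - s) / (1 + s)) ≤ (pj + lam) * (xj - s) := by
    have he : kd * ((xj - s) / (1 + s)) = (kd / (1 + s)) * (xj - s) := by ring
    rw [he]
    nlinarith [hfac]
  have h3 : kd * Real.log (1 + xj) ≤ kd * Real.log (1 + s) + kd * ((xj - s) / (1 + s)) := by
    nlinarith [hlog]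
  have h4 : kd * Real.log (1 + xj) ≤ kd * Real.log (1 + s) + (pj + lam) * (xj - s) :=
    le_trans h3 (by linarith)
  nlinarith [h4]

/-- If λ satisfies p j + λ > 0 for all j and
Σ_j b j · max{k·(d j)/(p j + λ) − 1, 0} = X, then the point
x*_j = max{k·(d j)/(p j + λ) − 1, 0} is a global maximizer of the
logarithmic-utility scheduling objective
F(x) = Σ_j b j · (k·(d j)·log(1 + x j) − (p j)·(x j)) over the feasible set
{x : x j ≥ 0 for all j, Σ_j b j · x j = X}. -/
theorem log_utility_maximizer (n : ℕ) (b p d : Fin (n + 1) → ℝ) (k X lam : ℝ)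
    (hb : ∀ j, 0 < b j) (hb0 : b 0 = 1)
    (hp : ∀ j, 0 < p j)
    (hd : ∀ j, 0 < d j ∧ d j ≤ 1) (hd0 : d 0 = 1)
    (hk : 0 < k) (hX : 0 ≤ X)
    (hlam : ∀ j, 0 < p j + lam)
    (heq : ∑ j, b j * max (k * d j / (p j + lam) - 1) 0 = X) :
    (fun j => max (k * d j / (p j + lam) - 1) 0) ∈
        {x : Fin (n + 1) → ℝ | (∀ j, 0 ≤ x j) ∧ ∑ j, b j * x j = X} ∧
      ∀ x ∈ {x : Fin (n + 1) → ℝ | (∀ j, 0 ≤ x j) ∧ ∑ j, b j * x j = X},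
        ∑ j, b j * (k * d j * Real.log (1 + x j) - p j * x j) ≤
          ∑ j, b j * (k * d j *
              Real.log (1 + max (k * d j / (p j + lam) - 1) 0) -
            p j * max (k * d j / (p j + lam) - 1) 0) := by
  refine ⟨⟨fun j => le_max_right _ _, heq⟩, ?_⟩
  rintro x ⟨hx1, hx2⟩
  set s : Fin (n + 1) → ℝ := fun j => max (k * d j / (p j + lam) - 1) 0 with hsdef
  have hzero : ∑ j, b j * (lam * (x j - s j)) = 0 := by
    have h : ∀ j ∈ Finset.univ, b j * (lam * (x j - s j)) =
        lam * (b j * x j) - lam * (b j * s j) := fun j _ => by ring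
    rw [Finset.sum_congr rfl h, Finset.sum_sub_distrib, ← Finset.mul_sum,
      ← Finset.mul_sum, hx2, heq, sub_self]
  have hstep : ∑ j, b j * (k * d j * Real.log (1 + x j) - p j * x j) =
      ∑ j, b j * (k * d j * Real.log (1 + x j) - p j * x j - lam * (x j - s j)) := by
    have h : ∀ j ∈ Finset.univ,
        b j * (k * d j * Real.log (1 + x j) - p j * x j - lam * (x j - s j)) =
        b j * (k * d j * Real.log (1 + x j) - p j * x j) -
          b j * (lam * (x j - s j)) := fun j _ => by ring
    rw [Finset.sum_congr rfl h, Finset.sum_sub_distrib, hzero, sub_zero]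
  rw [hstep]
  apply Finset.sum_le_sum
  intro j _
  apply mul_le_mul_of_nonneg_left _ (hb j).le
  have := log_util_key (k * d j) (p j) lam (x j)
    (mul_pos hk (hd j).1) (hlam j) (hx1 j)
  simpa using this
end

section
/- For every μ > 0, the function g̃(λ; μ) = Σ_{j=0}^{n} b j · θ̃(k·(d j)/(p j + λ) − 1; μ) is strictly decreasing (strictly antitone) in λ on [0, ∞). -/
lemma theta_strictMono (μ : ℝ) (hμ : 0 < μ) :
    StrictMono (fun x : ℝ => (x + Real.sqrt (x ^ 2 + μ)) / 2) := by
  have h : ∀ x : ℝ, HasDerivAt (fun x : ℝ => (x + Real.sqrt (x ^ 2 + μ)) / 2)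
      ((1 + x / Real.sqrt (x ^ 2 + μ)) / 2) x := by
    intro x
    have hpos : 0 < x ^ 2 + μ := by positivity
    have h1 : HasDerivAt (fun x : ℝ => x ^ 2 + μ) (2 * x) x := by
      simpa using ((hasDerivAt_pow 2 x).add_const μ)
    have h2 := h1.sqrt hpos.ne'
    have h3 := (hasDerivAt_id x).add h2
    have h4 : HasDerivAt (fun x : ℝ => (x + Real.sqrt (x ^ 2 + μ)) / 2)
        ((1 + 2 * x / (2 * Real.sqrt (x ^ 2 + μ))) / 2) x := h3.div_const 2
    convert h4 using 1
    have hs : Real.sqrt (x ^ 2 + μ) ≠ 0 := (Real.sqrt_pos.mpr hpos).ne'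
    field_simp
  have hderiv : ∀ x : ℝ, 0 < (1 + x / Real.sqrt (x ^ 2 + μ)) / 2 := by
    intro x
    have hpos : 0 < x ^ 2 + μ := by positivity
    have hs : 0 < Real.sqrt (x ^ 2 + μ) := Real.sqrt_pos.mpr hpos
    have hgt : -x < Real.sqrt (x ^ 2 + μ) := by
      rcases le_or_gt 0 x with hx | hx
      · linarith
      · have : (-x) ^ 2 < x ^ 2 + μ := by nlinarith
        have := (Real.lt_sqrt (by linarith : (0:ℝ) ≤ -x)).mpr this
        linarith
    have : -1 < x / Real.sqrt (x ^ 2 + μ) := by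
      rw [lt_div_iff₀ hs]; linarith
    linarith
  exact strictMono_of_deriv_pos (fun x => by rw [(h x).deriv]; exact hderiv x)

/-- For every μ > 0, the function
g̃(λ; μ) = Σ_j b j · θ̃(k·(d j)/(p j + λ) − 1; μ), where
θ̃(x; μ) = (x + √(x² + μ))/2, is strictly decreasing in λ on [0, ∞). -/
theorem smoothed_g_strictAnti (n : ℕ) (b p d : Fin (n + 1) → ℝ) (k μ : ℝ)
    (hb : ∀ j, 0 < b j) (hb0 : b 0 = 1)
    (hp : ∀ j, 0 < p j)
    (hd : ∀ j, 0 < d j ∧ d j ≤ 1) (hd0 : d 0 = 1)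
    (hk : 0 < k) (hμ : 0 < μ) :
    StrictAntiOn
      (fun lam : ℝ => ∑ j, b j *
        ((k * d j / (p j + lam) - 1 +
          Real.sqrt ((k * d j / (p j + lam) - 1) ^ 2 + μ)) / 2))
      (Set.Ici 0) := by
  intro a ha c hc hac
  apply Finset.sum_lt_sum_of_nonempty Finset.univ_nonempty
  intro j _
  have hja : 0 < p j + a := by have := hp j; have := ha; simp at ha; linarith
  have hjc : 0 < p j + c := by have := hp j; simp at hc; linarith
  have hkd : 0 < k * d j := mul_pos hk (hd j).1
  have hx : k * d j / (p j + c) < k * d j / (p j + a) :=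
    div_lt_div_of_pos_left hkd hja (by linarith)
  have := theta_strictMono μ hμ (by linarith : k * d j / (p j + c) - 1 < k * d j / (p j + a) - 1)
  exact mul_lt_mul_of_pos_left this (hb j)
end

section
/- For every μ > 0, the function λ ↦ g̃(λ; μ) = Σ_{j=0}^{n} b j · θ̃(k·(d j)/(p j + λ) − 1; μ) is differentiable at every λ ≥ 0, and its derivative there is strictly negative; in particular the derivative is nonzero, so the implicit function theorem applies to the equation g̃(λ; μ) = X. -/
/-- For every μ > 0, the function
g̃(λ; μ) = Σ_j b j · θ̃(k·(d j)/(p j + λ) − 1; μ), where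
θ̃(x; μ) = (x + √(x² + μ))/2, is differentiable at every λ ≥ 0 and its
derivative there is strictly negative (in particular nonzero, so the implicit
function theorem applies to g̃(λ; μ) = X). -/
theorem smoothed_g_deriv_neg (n : ℕ) (b p d : Fin (n + 1) → ℝ) (k μ : ℝ)
    (hb : ∀ j, 0 < b j) (hb0 : b 0 = 1)
    (hp : ∀ j, 0 < p j)
    (hd : ∀ j, 0 < d j ∧ d j ≤ 1) (hd0 : d 0 = 1)
    (hk : 0 < k) (hμ : 0 < μ) :
    ∀ lam : ℝ, 0 ≤ lam →
      DifferentiableAt ℝ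
        (fun lam : ℝ => ∑ j, b j *
          ((k * d j / (p j + lam) - 1 +
            Real.sqrt ((k * d j / (p j + lam) - 1) ^ 2 + μ)) / 2)) lam ∧
      deriv
        (fun lam : ℝ => ∑ j, b j *
          ((k * d j / (p j + lam) - 1 +
            Real.sqrt ((k * d j / (p j + lam) - 1) ^ 2 + μ)) / 2)) lam < 0 := by
  intro lam hlam
  set D : Fin (n + 1) → ℝ := fun j =>
    b j * ((-(k * d j) / (p j + lam) ^ 2 +
      (2 * (k * d j / (p j + lam) - 1) ^ 1 * (-(k * d j) / (p j + lam) ^ 2)) /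
        (2 * Real.sqrt ((k * d j / (p j + lam) - 1) ^ 2 + μ))) / 2) with hD
  have hpl : ∀ j : Fin (n + 1), 0 < p j + lam := fun j => by
    have := hp j; linarith
  have hterm : ∀ j : Fin (n + 1), HasDerivAt (fun lam : ℝ => b j *
      ((k * d j / (p j + lam) - 1 +
        Real.sqrt ((k * d j / (p j + lam) - 1) ^ 2 + μ)) / 2)) (D j) lam := by
    intro j
    have h1 : HasDerivAt (fun l : ℝ => p j + l) 1 lam := (hasDerivAt_id lam).const_add (p j)
    have hne : p j + lam ≠ 0 := (hpl j).ne'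
    have hdiv : HasDerivAt (fun l : ℝ => k * d j / (p j + l))
        (-(k * d j) / (p j + lam) ^ 2) lam := by
      have := (hasDerivAt_const lam (k * d j)).fun_div h1 hne
      exact this.congr_deriv (by ring)
    have hu : HasDerivAt (fun l : ℝ => k * d j / (p j + l) - 1)
        (-(k * d j) / (p j + lam) ^ 2) lam := hdiv.sub_const 1
    have hsq : HasDerivAt (fun l : ℝ => (k * d j / (p j + l) - 1) ^ 2 + μ)
        (2 * (k * d j / (p j + lam) - 1) ^ 1 * (-(k * d j) / (p j + lam) ^ 2)) lam := by
      have := (hu.pow 2).add_const μ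
      simpa using this
    have hpos : 0 < (k * d j / (p j + lam) - 1) ^ 2 + μ := by positivity
    have hsqrt := hsq.sqrt hpos.ne'
    exact ((hu.add hsqrt).div_const 2).const_mul (b j)
  have hsum : HasDerivAt (fun lam : ℝ => ∑ j, b j *
      ((k * d j / (p j + lam) - 1 +
        Real.sqrt ((k * d j / (p j + lam) - 1) ^ 2 + μ)) / 2)) (∑ j, D j) lam := by
    exact HasDerivAt.fun_sum (fun j _ => hterm j)
  have hDneg : ∀ j : Fin (n + 1), D j < 0 := by
    intro j
    set u : ℝ := k * d j / (p j + lam) - 1 with hu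
    set s : ℝ := Real.sqrt (u ^ 2 + μ) with hs
    have hs_pos : 0 < s := Real.sqrt_pos.2 (by positivity)
    have hs_gt : |u| < s := by
      have : Real.sqrt (u ^ 2) < s :=
        Real.sqrt_lt_sqrt (sq_nonneg u) (by linarith)
      simpa [Real.sqrt_sq_eq_abs] using this
    have hsu : 0 < s + u := by
      have := abs_le.1 hs_gt.le
      linarith [neg_abs_le u]
    have hu' : -(k * d j) / (p j + lam) ^ 2 < 0 := by
      have hkd : 0 < k * d j := mul_pos hk (hd j).1
      have : 0 < (p j + lam) ^ 2 := pow_pos (hpl j) 2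
      exact div_neg_of_neg_of_pos (by linarith) this
    have hfac : ∀ a : ℝ, a < 0 → a + (2 * u ^ 1 * a) / (2 * s) < 0 := by
      intro a ha
      have heq : a + (2 * u ^ 1 * a) / (2 * s) = a * ((s + u) / s) := by
        field_simp [hs_pos.ne']
      rw [heq]
      exact mul_neg_of_neg_of_pos ha (div_pos hsu hs_pos)
    have h := hfac _ hu'
    simp only [hD]
    exact mul_neg_of_pos_of_neg (hb j) (div_neg_of_neg_of_pos h two_pos)
  refine ⟨hsum.differentiableAt, ?_⟩
  rw [hsum.deriv]
  exact Finset.sum_neg (fun j _ => hDneg j) Finset.univ_nonempty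
end

section
/- Fix μ > 0 and let L = (Σ_{j=0}^{n} b j) · (√(1 + μ) − 1)/2. Then g̃(λ; μ) → L as λ → ∞, and for every X with L < X ≤ g̃(0; μ) there exists exactly one λ ∈ [0, ∞) such that g̃(λ; μ) = X. -/
private lemma theta_mono {μ : ℝ} (hμ : 0 < μ) {x y : ℝ} (hxy : x < y) :
    x + Real.sqrt (x ^ 2 + μ) < y + Real.sqrt (y ^ 2 + μ) := by
  have hx : -x < Real.sqrt (x ^ 2 + μ) := by
    have h1 : |x| < Real.sqrt (x ^ 2 + μ) := by
      rw [← Real.sqrt_sq_eq_abs]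
      exact Real.sqrt_lt_sqrt (sq_nonneg x) (by linarith)
    linarith [neg_abs_le x]
  have hy : -y < Real.sqrt (y ^ 2 + μ) := by
    have h1 : |y| < Real.sqrt (y ^ 2 + μ) := by
      rw [← Real.sqrt_sq_eq_abs]
      exact Real.sqrt_lt_sqrt (sq_nonneg y) (by linarith)
    linarith [neg_abs_le y]
  have hx2 : Real.sqrt (x ^ 2 + μ) ^ 2 = x ^ 2 + μ := Real.sq_sqrt (by positivity)
  have hy2 : Real.sqrt (y ^ 2 + μ) ^ 2 = y ^ 2 + μ := Real.sq_sqrt (by positivity)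
  nlinarith [Real.sqrt_nonneg (x ^ 2 + μ), Real.sqrt_nonneg (y ^ 2 + μ), hx, hy, hxy,
    mul_pos (show (0:ℝ) < Real.sqrt (x ^ 2 + μ) + x by linarith)
      (show (0:ℝ) < Real.sqrt (y ^ 2 + μ) + y by linarith)]

/-- Fix μ > 0 and let L = (Σ_j b j)·(√(1 + μ) − 1)/2. Then
g̃(λ; μ) = Σ_j b j · θ̃(k·(d j)/(p j + λ) − 1; μ) tends to L as λ → ∞, and for
every X with L < X ≤ g̃(0; μ) there is exactly one λ ∈ [0, ∞) with
g̃(λ; μ) = X. -/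
theorem smoothed_g_limit_and_unique_solution (n : ℕ) (b p d : Fin (n + 1) → ℝ)
    (k μ : ℝ)
    (hb : ∀ j, 0 < b j) (hb0 : b 0 = 1)
    (hp : ∀ j, 0 < p j)
    (hd : ∀ j, 0 < d j ∧ d j ≤ 1) (hd0 : d 0 = 1)
    (hk : 0 < k) (hμ : 0 < μ) :
    Filter.Tendsto
      (fun lam : ℝ => ∑ j, b j *
        ((k * d j / (p j + lam) - 1 +
          Real.sqrt ((k * d j / (p j + lam) - 1) ^ 2 + μ)) / 2))
      Filter.atTop
      (nhds ((∑ j, b j) * (Real.sqrt (1 + μ) - 1) / 2)) ∧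
    ∀ X : ℝ, (∑ j, b j) * (Real.sqrt (1 + μ) - 1) / 2 < X →
      X ≤ ∑ j, b j *
        ((k * d j / (p j + 0) - 1 +
          Real.sqrt ((k * d j / (p j + 0) - 1) ^ 2 + μ)) / 2) →
      ∃! lam : ℝ, lam ∈ Set.Ici (0 : ℝ) ∧
        ∑ j, b j *
          ((k * d j / (p j + lam) - 1 +
            Real.sqrt ((k * d j / (p j + lam) - 1) ^ 2 + μ)) / 2) = X := by
  have hbp : ∀ (j : Fin (n+1)) (lam : ℝ), 0 ≤ lam → 0 < p j + lam :=
    fun j lam h => by linarith [hp j]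
  set g : ℝ → ℝ := fun lam => ∑ j, b j *
        ((k * d j / (p j + lam) - 1 +
          Real.sqrt ((k * d j / (p j + lam) - 1) ^ 2 + μ)) / 2) with hgdef
  -- strict antitonicity on [0, ∞)
  have hanti : StrictAntiOn g (Set.Ici (0:ℝ)) := by
    intro a ha c hc hac
    apply Finset.sum_lt_sum_of_nonempty Finset.univ_nonempty
    intro j _
    have hkd : 0 < k * d j := mul_pos hk (hd j).1
    have h1 : k * d j / (p j + c) < k * d j / (p j + a) :=
      div_lt_div_of_pos_left hkd (hbp j a ha) (by linarith)
    have h2 := theta_mono hμ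
      (show k * d j / (p j + c) - 1 < k * d j / (p j + a) - 1 by linarith)
    have h3 : (k * d j / (p j + c) - 1 +
        Real.sqrt ((k * d j / (p j + c) - 1) ^ 2 + μ)) / 2 <
        (k * d j / (p j + a) - 1 +
        Real.sqrt ((k * d j / (p j + a) - 1) ^ 2 + μ)) / 2 := by linarith
    exact mul_lt_mul_of_pos_left h3 (hb j)
  -- continuity on [0, ∞)
  have hcont : ContinuousOn g (Set.Ici (0:ℝ)) := by
    apply continuousOn_finset_sum
    intro j _
    have h1 : ContinuousOn (fun lam : ℝ => k * d j / (p j + lam) - 1) (Set.Ici 0) := by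
      apply ContinuousOn.sub _ continuousOn_const
      exact continuousOn_const.div (continuous_const.add continuous_id).continuousOn
        (fun lam hl => ne_of_gt (hbp j lam hl))
    exact continuousOn_const.mul
      ((h1.add (Real.continuous_sqrt.comp_continuousOn
        ((h1.pow 2).add continuousOn_const))).div_const 2)
  -- limit at infinity
  have hlim : Filter.Tendsto g Filter.atTop
      (nhds ((∑ j, b j) * (Real.sqrt (1 + μ) - 1) / 2)) := by
    have h1 : ∀ j : Fin (n+1), Filter.Tendsto (fun lam : ℝ => b j *
        ((k * d j / (p j + lam) - 1 +
          Real.sqrt ((k * d j / (p j + lam) - 1) ^ 2 + μ)) / 2)) Filter.atTop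
        (nhds (b j * (((0:ℝ) - 1 + Real.sqrt (((0:ℝ) - 1) ^ 2 + μ)) / 2))) := by
      intro j
      have h0 : Filter.Tendsto (fun lam : ℝ => k * d j / (p j + lam))
          Filter.atTop (nhds 0) :=
        Filter.Tendsto.div_atTop tendsto_const_nhds
          (Filter.tendsto_atTop_add_const_left _ _ Filter.tendsto_id)
      have hc : Continuous (fun x : ℝ => b j *
          ((x - 1 + Real.sqrt ((x - 1) ^ 2 + μ)) / 2)) := by
        continuity
      exact (hc.tendsto 0).comp h0
    have h2 := tendsto_finset_sum Finset.univ (fun j _ => h1 j)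
    have hval : (∑ j, b j * (((0:ℝ) - 1 + Real.sqrt (((0:ℝ) - 1) ^ 2 + μ)) / 2)) =
        (∑ j, b j) * (Real.sqrt (1 + μ) - 1) / 2 := by
      rw [show (((0:ℝ) - 1) ^ 2) = 1 by norm_num, ← Finset.sum_mul]
      ring
    rw [hval] at h2
    exact h2
  refine ⟨hlim, ?_⟩
  intro X hLX hX0
  obtain ⟨M, hgM, hM0⟩ : ∃ M : ℝ, g M < X ∧ (0:ℝ) ≤ M := by
    have := (hlim.eventually_lt_const hLX).and (Filter.eventually_ge_atTop (0:ℝ))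
    exact this.exists
  have hXmem : X ∈ Set.Icc (g M) (g 0) := ⟨le_of_lt hgM, hX0⟩
  obtain ⟨lam, hlam, hglam⟩ :=
    intermediate_value_Icc' hM0 (hcont.mono (Set.Icc_subset_Ici_self)) hXmem
  refine ⟨lam, ⟨hlam.1, hglam⟩, ?_⟩
  intro y hy
  exact hanti.injOn hy.1 hlam.1 (hy.2.trans hglam.symm)
end
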